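/- arXiv:2008.07413 — 5 statements merged into one kernel-verified Lean document; each statement's English description precedes it below -/
import Mathlib

section
/- Let X be a proper metric space homeomorphic to ℝ², let λ ≥ 1 and R > 0. If X is (λ,R)-linearly locally contractible, then X is (λ',R)-linearly locally connected for every λ' > λ. -/
open Metric MeasureTheory Set

noncomputable section

/-- The Euclidean plane. -/
abbrev E2 : Type := EuclideanSpace ℝ (Fin 2)

/-- A metric space is geodesic if any two points are joined by a path whose length equals
their distance (equivalently, by an isometric image of the interval `[0, dist x y]`). -/
def IsGeodesicSpace (X : Type*) [MetricSpace X] : Prop :=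
  ∀ x y : X, ∃ γ : ℝ → X, γ 0 = x ∧ γ (dist x y) = y ∧
    ∀ s ∈ Set.Icc (0 : ℝ) (dist x y), ∀ t ∈ Set.Icc (0 : ℝ) (dist x y),
      dist (γ s) (γ t) = |s - t|

/-- A set is a Jordan curve if it is a homeomorphic image of the circle `S¹`. -/
def IsJordanCurve {X : Type*} [TopologicalSpace X] (S : Set X) : Prop :=
  Nonempty (↥(Metric.sphere (0 : E2) 1) ≃ₜ ↥S)

/-- A Jordan domain is a bounded domain (open connected set) whose topological boundary
is a Jordan curve. -/
def IsJordanDomain {X : Type*} [MetricSpace X] (U : Set X) : Prop :=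
  IsOpen U ∧ IsConnected U ∧ Bornology.IsBounded U ∧ IsJordanCurve (frontier U)

/-- Hausdorff 2-measure, normalized so that it agrees with Lebesgue measure on `ℝ²`
(Mathlib's `μH[2]` uses `diam²`; the normalized measure is `(π/4)·μH[2]`). -/
def normH2 (X : Type*) [EMetricSpace X] [MeasurableSpace X] [BorelSpace X] :
    Measure X := ENNReal.ofReal (Real.pi / 4) • μH[2]

/-- The geometric `C`-quadratic isoperimetric inequality:
`ℋ²(U) ≤ C·ℋ¹(∂U)²` for every Jordan domain `U`. -/
def GeomQII (X : Type*) [MetricSpace X] [MeasurableSpace X] [BorelSpace X] (C : ℝ) : Prop :=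
  ∀ U : Set X, IsJordanDomain U →
    normH2 X U ≤ ENNReal.ofReal C * (μH[1] (frontier U)) ^ 2

/-- `X` is `(λ,R)`-linearly locally connected: (LLC1) any two points of a ball `B(x,r)`,
`r ∈ (0,R]`, lie in a continuum contained in `B(x,λr)`; (LLC2) any two points of
`X ∖ B(x,r)` lie in a continuum contained in `X ∖ B(x,r/λ)`. -/
def LinearlyLocallyConnected (X : Type*) [MetricSpace X] (lam R : ℝ) : Prop :=
  (∀ (x : X) (r : ℝ), 0 < r → r ≤ R → ∀ y ∈ Metric.ball x r, ∀ z ∈ Metric.ball x r,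
      ∃ E : Set X, IsCompact E ∧ IsConnected E ∧ E ⊆ Metric.ball x (lam * r) ∧
        y ∈ E ∧ z ∈ E) ∧
  (∀ (x : X) (r : ℝ), 0 < r → r ≤ R → ∀ y ∉ Metric.ball x r, ∀ z ∉ Metric.ball x r,
      ∃ E : Set X, IsCompact E ∧ IsConnected E ∧ E ⊆ (Metric.ball x (r / lam))ᶜ ∧
        y ∈ E ∧ z ∈ E)

/-- `X` is `(λ,R)`-linearly locally contractible: every ball `B(x,r)` with `r ∈ (0,R]` can
be contracted to a point inside `B(x,λr)`, i.e. the inclusion `B(x,r) ↪ B(x,λr)` is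
null-homotopic. -/
def LinearlyLocallyContractible (X : Type*) [MetricSpace X] (lam R : ℝ) : Prop :=
  ∀ (x : X) (r : ℝ), 0 < r → r ≤ R →
    ∃ (hsub : Metric.ball x r ⊆ Metric.ball x (lam * r))
      (c : ↥(Metric.ball x (lam * r))),
      ContinuousMap.Homotopic
        ⟨Set.inclusion hsub, continuous_inclusion hsub⟩
        (ContinuousMap.const _ c)

/-!
For LLC1, the contraction of `B(x,r)` inside `B(x,λr)` drags `y` and `z` along paths to the
same point. For LLC2, put `t = r/λ`: the contraction of `B(x,t)` inside `B(x,r)` restricts to a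
null-homotopy of the compact set `K = B̄(x, r/λ')` that avoids `y, z ∉ B(x,r)`. Transport
everything to `ℂ`. If the component of `ℂ ∖ K` containing `y` were bounded, the null-homotopy
would give a continuous logarithm of `w - y` on its frontier; a Tietze extension of it to the
closure would glue with the identity outside to a self-map of `ℂ` that misses `y` but is the
identity off a bounded set, which is impossible because the identity of the unit circle has no
continuous logarithm. Hence `y` and `z` lie in the unbounded component of `ℂ ∖ K`, which is unique
and path connected.
-/

open Bornology Complex

theorem ContinuousMap.Nullhomotopic.joined {X Y : Type*} [TopologicalSpace X]
    [TopologicalSpace Y] {f : C(X, Y)} (hf : f.Nullhomotopic) (a b : X) : Joined (f a) (f b) := by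
  obtain ⟨c, ⟨F⟩⟩ := hf
  exact ⟨(F.evalAt a).trans (F.evalAt b).symm⟩

theorem JoinedIn.exists_isCompact_isConnected {X : Type*} [TopologicalSpace X] {F : Set X}
    {x y : X} (h : JoinedIn F x y) :
    ∃ E : Set X, IsCompact E ∧ IsConnected E ∧ E ⊆ F ∧ x ∈ E ∧ y ∈ E := by
  obtain ⟨γ, hγ⟩ := h
  exact ⟨range γ, isCompact_range γ.continuous, isConnected_range γ.continuous,
    range_subset_iff.2 hγ, ⟨0, γ.source⟩, ⟨1, γ.target⟩⟩

theorem IsOpen.frontier_connectedComponentIn_subset {X : Type*} [TopologicalSpace X]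
    [LocallyConnectedSpace X] {F : Set X} (hF : IsOpen F) (x : X) :
    frontier (connectedComponentIn F x) ⊆ Fᶜ := by
  intro w hw hwF
  obtain ⟨v, hvw, hvx⟩ := mem_closure_iff.1 hw.1 _ hF.connectedComponentIn
    (mem_connectedComponentIn hwF)
  have hwx : connectedComponentIn F w = connectedComponentIn F x :=
    (connectedComponentIn_eq hvw).trans (connectedComponentIn_eq hvx).symm
  apply hw.2
  rw [hF.connectedComponentIn.interior_eq, ← hwx]
  exact mem_connectedComponentIn hwF

theorem Homeomorph.nullhomotopic_inclusion_image {X Y : Type*} [TopologicalSpace X]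
    [TopologicalSpace Y] (e : X ≃ₜ Y) {K V : Set X} {hKV : K ⊆ V}
    (hnull : (ContinuousMap.inclusion hKV).Nullhomotopic) :
    (ContinuousMap.inclusion (image_mono hKV : e '' K ⊆ e '' V)).Nullhomotopic := by
  convert (hnull.comp_right (e.image V : C(V, e '' V))).comp_left
    ((e.image K).symm : C(e '' K, K))
  ext a
  obtain ⟨_, a, ha, rfl⟩ := a
  exact congr_arg e (congr_arg Subtype.val ((e.image K).symm_apply_apply ⟨a, ha⟩)).symm

theorem isConnected_setOf_lt_norm {E : Type*} [NormedAddCommGroup E] [NormedSpace ℝ E]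
    (hE : 1 < Module.rank ℝ E) {M : ℝ} (hM : 0 ≤ M) : IsConnected {w : E | M < ‖w‖} := by
  have hpolar : {w : E | M < ‖w‖} = (fun p : ℝ × E => p.1 • p.2) '' (Ioi M ×ˢ sphere 0 1) := by
    ext w
    constructor
    · intro hw
      have hw₀ : w ≠ 0 := norm_pos_iff.1 (hM.trans_lt hw)
      exact ⟨(‖w‖, ‖w‖⁻¹ • w), ⟨hw, by simp [norm_smul, hw₀]⟩, by simp [smul_smul, hw₀]⟩
    · rintro ⟨⟨r, u⟩, ⟨hr, hu⟩, rfl⟩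
      have hr' : M < r := hr
      simp only [mem_sphere_iff_norm, sub_zero] at hu
      simp [norm_smul, hu, abs_of_pos (hM.trans_lt hr'), hr']
  rw [hpolar]
  exact (isConnected_Ioi.prod (isConnected_sphere hE 0 zero_le_one)).image _ (by fun_prop)

theorem connectedComponentIn_compl_eq_of_not_isBounded {E : Type*} [NormedAddCommGroup E]
    [NormedSpace ℝ E] (hE : 1 < Module.rank ℝ E) {K : Set E} (hK : IsBounded K) {y z : E}
    (hy : ¬ IsBounded (connectedComponentIn Kᶜ y)) (hz : ¬ IsBounded (connectedComponentIn Kᶜ z)) :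
    connectedComponentIn Kᶜ y = connectedComponentIn Kᶜ z := by
  obtain ⟨M, hM, hKM⟩ := hK.subset_closedBall_lt 0 0
  have hext : IsConnected {w : E | M < ‖w‖} := isConnected_setOf_lt_norm hE hM.le
  have hextK : {w : E | M < ‖w‖} ⊆ Kᶜ := fun w hw hwK => by
    have := hKM hwK
    rw [mem_closedBall, dist_zero_right] at this
    exact lt_irrefl _ (hw.trans_le this)
  obtain ⟨w₀, hw₀⟩ := hext.nonempty
  suffices ∀ x, ¬ IsBounded (connectedComponentIn Kᶜ x) →
      connectedComponentIn Kᶜ x = connectedComponentIn Kᶜ w₀ from (this y hy).trans (this z hz).symm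
  intro x hx
  obtain ⟨w, hwx, hw⟩ : ∃ w ∈ connectedComponentIn Kᶜ x, M < ‖w‖ := by
    by_contra! H
    exact hx ((isBounded_closedBall (x := 0) (r := M)).subset fun w hw => by simpa using H w hw)
  rw [connectedComponentIn_eq hwx]
  exact connectedComponentIn_eq (hext.isPreconnected.subset_connectedComponentIn hw hextK hw₀)

theorem ContinuousMap.Nullhomotopic.exists_exp_eq {A : Type*} [TopologicalSpace A]
    {f : C(A, {w : ℂ // w ≠ 0})} (hf : f.Nullhomotopic) :
    ∃ ℓ : C(A, ℂ), ∀ a, exp (ℓ a) = f a := by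
  obtain ⟨c, ⟨F⟩⟩ := hf
  have hF₀ : ∀ a, F.symm (0, a) = ⟨exp (log c), exp_ne_zero _⟩ := fun a => by
    ext; simp [exp_log c.2]
  refine ⟨(isCoveringMap_exp.liftHomotopy F.symm.toContinuousMap (.const A (log c)) hF₀).comp
    (.prodMk (.const A 1) (.id A)), fun a => ?_⟩
  have := congr_fun
    (isCoveringMap_exp.liftHomotopy_lifts F.symm.toContinuousMap (.const A (log c)) hF₀) (1, a)
  simpa using congr_arg Subtype.val this

theorem Complex.not_exists_exp_eq_on_unit_sphere :
    ¬ ∃ ℓ : C(sphere (0 : ℂ) 1, ℂ), ∀ a, exp (ℓ a) = a := by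
  rintro ⟨ℓ, hℓ⟩
  let u : ℝ → sphere (0 : ℂ) 1 := fun θ => ⟨exp (θ * I), by simp⟩
  let f : ℝ → ℂ := fun θ => ℓ (u θ) - θ * I
  have hf : MapsTo f univ (AddSubgroup.zmultiples (2 * Real.pi * I)) := fun θ _ => by
    obtain ⟨n, hn⟩ := exp_eq_one_iff.1 (by simp [f, exp_sub, hℓ, u] : exp (f θ) = 1)
    exact ⟨n, by simp [hn]⟩
  have hconst := (isPreconnected_univ (α := ℝ)).constant_of_mapsTo
    (isDiscrete_iff_discreteTopology.2 (NormedSpace.discreteTopology_zmultiples _))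
    (by fun_prop) hf (mem_univ 0) (mem_univ (2 * Real.pi))
  have hu : u (2 * Real.pi) = u 0 := Subtype.ext (by simp [u, exp_two_pi_mul_I])
  simp only [f, hu, ofReal_zero, ofReal_mul, ofReal_ofNat] at hconst
  exact two_pi_I_ne_zero (by linear_combination hconst)

theorem Complex.surjective_of_eqOn_id_compl {q : ℂ → ℂ} (hq : Continuous q) {s : Set ℂ}
    (hs : IsBounded s) (hqs : EqOn q id sᶜ) : Function.Surjective q := by
  intro z
  by_contra! hz
  obtain ⟨M, hM, hsM⟩ := hs.subset_ball_lt 0 z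
  have hM₀ : (M : ℂ) ≠ 0 := by exact_mod_cast hM.ne'
  let g : C(ℂ, {w : ℂ // w ≠ 0}) :=
    ⟨fun w => ⟨(q (z + M * w) - z) / M, div_ne_zero (sub_ne_zero.2 (hz _)) hM₀⟩, by fun_prop⟩
  obtain ⟨ℓ, hℓ⟩ := (((id_nullhomotopic ℂ).comp_right g).comp_left
    ⟨((↑) : sphere (0 : ℂ) 1 → ℂ), continuous_subtype_val⟩).exists_exp_eq
  refine not_exists_exp_eq_on_unit_sphere ⟨ℓ, fun a => ?_⟩
  have ha : z + M * a ∉ s := fun h => by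
    simpa [dist_eq_norm, abs_of_pos hM] using hsM h
  rw [hℓ]
  simp [g, hqs ha, hM₀]

theorem Complex.not_exists_exp_eq_sub_on_frontier {U : Set ℂ} (hU : IsBounded U) {z : ℂ}
    (hz : z ∈ U) : ¬ ∃ ℓ : C(frontier U, ℂ), ∀ a, exp (ℓ a) = a - z := by
  rintro ⟨ℓ, hℓ⟩
  obtain ⟨g, hg⟩ := ℓ.exists_restrict_eq isClosed_frontier
  have hgU : ∀ w ∈ frontier U, z + exp (g w) = w := fun w hw => by
    have := hℓ ⟨w, hw⟩
    rw [← hg] at this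
    simp only [ContinuousMap.restrict_apply] at this
    rw [this]; ring
  classical
  let q : ℂ → ℂ := (closure U).piecewise (fun w => z + exp (g w)) id
  have hq : Continuous q :=
    Continuous.piecewise (fun w hw => hgU w (frontier_closure_subset hw)) (by fun_prop)
      continuous_id
  obtain ⟨w, hw⟩ := surjective_of_eqOn_id_compl hq hU.closure
    (fun w hw => piecewise_eq_of_notMem _ _ _ hw) z
  by_cases hwU : w ∈ closure U
  · rw [show q w = z + exp (g w) from piecewise_eq_of_mem _ _ _ hwU] at hw
    exact exp_ne_zero _ (by linear_combination hw)
  · rw [show q w = w from piecewise_eq_of_notMem _ _ _ hwU] at hw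
    exact hwU (hw ▸ subset_closure hz)

theorem Complex.not_isBounded_connectedComponentIn_compl {K V : Set ℂ} (hK : IsClosed K)
    {hKV : K ⊆ V} (hnull : (ContinuousMap.inclusion hKV).Nullhomotopic) {z : ℂ} (hz : z ∉ V) :
    ¬ IsBounded (connectedComponentIn Kᶜ z) := by
  intro hbdd
  have hWK : frontier (connectedComponentIn Kᶜ z) ⊆ K := by
    simpa using hK.isOpen_compl.frontier_connectedComponentIn_subset z
  let subZ : C(V, {w : ℂ // w ≠ 0}) :=
    ⟨fun v => ⟨v - z, sub_ne_zero.2 (ne_of_mem_of_not_mem v.2 hz)⟩, by fun_prop⟩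
  obtain ⟨ℓ, hℓ⟩ :=
    ((hnull.comp_right subZ).comp_left (ContinuousMap.inclusion hWK)).exists_exp_eq
  exact not_exists_exp_eq_sub_on_frontier hbdd
    (mem_connectedComponentIn fun hzK => hz (hKV hzK)) ⟨ℓ, hℓ⟩

theorem Complex.joinedIn_compl_of_nullhomotopic {K V : Set ℂ} (hK : IsCompact K) {hKV : K ⊆ V}
    (hnull : (ContinuousMap.inclusion hKV).Nullhomotopic) {y z : ℂ} (hy : y ∉ V) (hz : z ∉ V) :
    JoinedIn Kᶜ y z := by
  have hyK : y ∈ Kᶜ := fun h => hy (hKV h)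
  have hzK : z ∈ Kᶜ := fun h => hz (hKV h)
  have hyz := connectedComponentIn_compl_eq_of_not_isBounded (by simp) hK.isBounded
    (not_isBounded_connectedComponentIn_compl hK.isClosed hnull hy)
    (not_isBounded_connectedComponentIn_compl hK.isClosed hnull hz)
  have hpath : IsPathConnected (connectedComponentIn Kᶜ y) :=
    hK.isClosed.isOpen_compl.connectedComponentIn.isConnected_iff_isPathConnected.1
      (isConnected_connectedComponentIn_iff.2 hyK)
  exact (hpath.joinedIn y (mem_connectedComponentIn hyK) z
    (hyz ▸ mem_connectedComponentIn hzK)).mono (connectedComponentIn_subset _ _)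

theorem Homeomorph.joinedIn_compl_of_nullhomotopic {X : Type*} [TopologicalSpace X]
    (ψ : X ≃ₜ ℂ) {K V : Set X} (hK : IsCompact K) {hKV : K ⊆ V}
    (hnull : (ContinuousMap.inclusion hKV).Nullhomotopic) {y z : X} (hy : y ∉ V) (hz : z ∉ V) :
    JoinedIn Kᶜ y z := by
  have hψ := Complex.joinedIn_compl_of_nullhomotopic (hK.image ψ.continuous)
    (ψ.nullhomotopic_inclusion_image hnull) (y := ψ y) (z := ψ z)
    (by rwa [ψ.injective.mem_set_image]) (by rwa [ψ.injective.mem_set_image])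
  simpa [← ψ.image_compl, image_image] using hψ.map ψ.symm.continuous

namespace LinearlyLocallyContractible

variable {X : Type*} [MetricSpace X] {lam R : ℝ}

theorem joinedIn_ball (h : LinearlyLocallyContractible X lam R) {x : X} {r : ℝ} (hr : 0 < r)
    (hrR : r ≤ R) {y z : X} (hy : y ∈ ball x r) (hz : z ∈ ball x r) :
    JoinedIn (ball x (lam * r)) y z := by
  obtain ⟨hsub, c, hc⟩ := h x r hr hrR
  exact (joinedIn_iff_joined (hsub hy) (hsub hz)).2
    (ContinuousMap.Nullhomotopic.joined ⟨c, hc⟩ ⟨y, hy⟩ ⟨z, hz⟩)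

theorem joinedIn_compl_closedBall [ProperSpace X] (ψ : X ≃ₜ ℂ) (hlam : 1 ≤ lam)
    (h : LinearlyLocallyContractible X lam R) {x : X} {r s : ℝ} (hr : 0 < r) (hrR : r ≤ R)
    (hs : s < r / lam) {y z : X} (hy : y ∉ ball x r) (hz : z ∉ ball x r) :
    JoinedIn (closedBall x s)ᶜ y z := by
  have hlam₀ : 0 < lam := zero_lt_one.trans_le hlam
  obtain ⟨hsub, c, hc⟩ := h x (r / lam) (div_pos hr hlam₀) ((div_le_self hr.le hlam).trans hrR)
  have hK : closedBall x s ⊆ ball x (r / lam) := closedBall_subset_ball hs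
  have hr' : lam * (r / lam) = r := mul_div_cancel₀ r hlam₀.ne'
  exact ψ.joinedIn_compl_of_nullhomotopic (isCompact_closedBall x s) (hKV := hK.trans hsub)
    (ContinuousMap.Nullhomotopic.comp_left ⟨c, hc⟩ (ContinuousMap.inclusion hK))
    (by rwa [hr']) (by rwa [hr'])

end LinearlyLocallyContractible

theorem llContractible_implies_llc_general
    (X : Type) [MetricSpace X] [ProperSpace X]
    (hhomeo : Nonempty (X ≃ₜ E2))
    (lam R : ℝ) (hlam : 1 ≤ lam)
    (h : LinearlyLocallyContractible X lam R) :
    ∀ lam' : ℝ, lam < lam' → LinearlyLocallyConnected X lam' R := by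
  intro lam' hlam'
  obtain ⟨φ⟩ := hhomeo
  let ψ : X ≃ₜ ℂ := φ.trans orthonormalBasisOneI.repr.toHomeomorph.symm
  refine ⟨fun x r hr hrR y hy z hz => ?_, fun x r hr hrR y hy z hz => ?_⟩
  · have hball : ball x (lam * r) ⊆ ball x (lam' * r) := ball_subset_ball (by gcongr)
    exact ((h.joinedIn_ball hr hrR hy hz).mono hball).exists_isCompact_isConnected
  · have hs : r / lam' < r / lam := div_lt_div_of_pos_left hr (by linarith) hlam'
    exact ((h.joinedIn_compl_closedBall ψ hlam hr hrR hs hy hz).mono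
      (compl_subset_compl.2 ball_subset_closedBall)).exists_isCompact_isConnected

/-- Lemma 2.1(i): a proper metric space homeomorphic to `ℝ²` which is `(λ,R)`-linearly
locally contractible is `(λ',R)`-linearly locally connected for every `λ' > λ`. -/
theorem llContractible_implies_llc
    (X : Type) [MetricSpace X] [ProperSpace X]
    (hhomeo : Nonempty (X ≃ₜ E2))
    (lam R : ℝ) (hlam : 1 ≤ lam) (hR : 0 < R)
    (h : LinearlyLocallyContractible X lam R) :
    ∀ lam' : ℝ, lam < lam' → LinearlyLocallyConnected X lam' R :=
  llContractible_implies_llc_general X hhomeo lam R hlam h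
end
end

section
/- Let λ > 1 + √2 and δ ∈ (0,1). Set K = 4/λ + 2/λ² and ε = (δ+1)²/(δ² + K·δ + 1) − 1. Then ε > 0, and for all real numbers l₁, l₂, d satisfying 0 < δ·l₂ ≤ l₁ ≤ l₂ and 0 ≤ λ·d < l₁, one has (l₁+d)² + (l₂+d)² ≤ (1/(1+ε))·(l₁+l₂)². -/
/-!
Expanding, `(l₁+d)² + (l₂+d)² - l₁² - l₂² = 2d(l₁+l₂) + 2d²`, and `d < l₁/λ ≤ l₂/λ` bounds this
by `K l₁ l₂`. The ratio `(l₁² + K l₁ l₂ + l₂²)/(l₁+l₂)²` is largest, over `δ ≤ l₁/l₂ ≤ 1`, at the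
endpoint `l₁/l₂ = δ`, because `K < 2`; this is `(δ² + Kδ + 1)/(δ+1)² = 1/(1+ε)`.
-/

lemma four_div_add_two_div_sq_lt_two {lam : ℝ} (hlam : 1 + √2 < lam) :
    4 / lam + 2 / lam ^ 2 < 2 := by
  have hsqrt : √2 ^ 2 = 2 := Real.sq_sqrt zero_le_two
  have hlam0 : 0 < lam := lt_of_le_of_lt (by positivity) hlam
  have hquad : 2 * lam + 1 < lam ^ 2 := by
    nlinarith [Real.sqrt_nonneg 2]
  rw [div_add_div _ _ hlam0.ne' (by positivity), div_lt_iff₀ (by positivity)]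
  nlinarith

lemma add_sq_add_add_sq_le {lam d l₁ l₂ : ℝ} (hlam : 0 < lam) (hd : 0 ≤ d)
    (hd₁ : lam * d ≤ l₁) (h₁₂ : l₁ ≤ l₂) :
    (l₁ + d) ^ 2 + (l₂ + d) ^ 2 ≤ l₁ ^ 2 + (4 / lam + 2 / lam ^ 2) * (l₁ * l₂) + l₂ ^ 2 := by
  have hdu : d ≤ l₁ / lam := by rw [le_div_iff₀ hlam]; linarith
  have hu : 0 ≤ l₁ / lam := hd.trans hdu
  have hl₂ : 0 ≤ l₂ := (mul_nonneg hlam.le hd).trans (hd₁.trans h₁₂)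
  have hlin : 2 * d * (l₁ + l₂) ≤ 4 * (l₁ / lam) * l₂ :=
    calc 2 * d * (l₁ + l₂) ≤ 4 * d * l₂ := by nlinarith
      _ ≤ 4 * (l₁ / lam) * l₂ := by gcongr
  have hquad : d ^ 2 ≤ (l₁ / lam) * (l₂ / lam) := by
    calc d ^ 2 ≤ (l₁ / lam) ^ 2 := pow_le_pow_left₀ hd hdu 2
      _ ≤ (l₁ / lam) * (l₂ / lam) := by
        rw [sq]; gcongr
  calc (l₁ + d) ^ 2 + (l₂ + d) ^ 2 = l₁ ^ 2 + l₂ ^ 2 + 2 * d * (l₁ + l₂) + 2 * d ^ 2 := by ring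
    _ ≤ l₁ ^ 2 + l₂ ^ 2 + 4 * (l₁ / lam) * l₂ + 2 * ((l₁ / lam) * (l₂ / lam)) := by gcongr
    _ = l₁ ^ 2 + (4 / lam + 2 / lam ^ 2) * (l₁ * l₂) + l₂ ^ 2 := by ring

lemma add_one_sq_mul_le_mul_add_sq {K δ l₁ l₂ : ℝ} (hK : K ≤ 2) (hδ : 0 ≤ δ)
    (h₁ : δ * l₂ ≤ l₁) (h₁₂ : l₁ ≤ l₂) :
    (δ + 1) ^ 2 * (l₁ ^ 2 + K * (l₁ * l₂) + l₂ ^ 2) ≤ (δ ^ 2 + K * δ + 1) * (l₁ + l₂) ^ 2 := by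
  have h₂ : δ * l₁ ≤ l₂ := by nlinarith
  have hgap : (δ ^ 2 + K * δ + 1) * (l₁ + l₂) ^ 2 - (δ + 1) ^ 2 * (l₁ ^ 2 + K * (l₁ * l₂) + l₂ ^ 2)
      = (2 - K) * ((l₁ - δ * l₂) * (l₂ - δ * l₁)) := by ring
  have : 0 ≤ (2 - K) * ((l₁ - δ * l₂) * (l₂ - δ * l₁)) :=
    mul_nonneg (by linarith) (mul_nonneg (by linarith) (by linarith))
  linarith

lemma add_one_sq_div_sub_one_pos {K δ : ℝ} (hK₀ : 0 ≤ K) (hK : K < 2) (hδ : 0 < δ) :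
    0 < (δ + 1) ^ 2 / (δ ^ 2 + K * δ + 1) - 1 := by
  rw [sub_pos, one_lt_div (by positivity)]
  nlinarith

theorem chord_arc_quantitative_general (lam δ K ε : ℝ)
    (hlam : 1 + Real.sqrt 2 < lam) (hδ0 : 0 < δ)
    (hK : K = 4 / lam + 2 / lam ^ 2)
    (hε : ε = (δ + 1) ^ 2 / (δ ^ 2 + K * δ + 1) - 1) :
    0 < ε ∧
      ∀ l₁ l₂ d : ℝ, 0 < δ * l₂ → δ * l₂ ≤ l₁ → l₁ ≤ l₂ →
        0 ≤ lam * d → lam * d < l₁ →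
        (l₁ + d) ^ 2 + (l₂ + d) ^ 2 ≤ (1 / (1 + ε)) * (l₁ + l₂) ^ 2 := by
  have hlam0 : 0 < lam := lt_of_le_of_lt (by positivity) hlam
  have hK₀ : 0 ≤ K := by rw [hK]; positivity
  have hK₂ : K < 2 := hK ▸ four_div_add_two_div_sq_lt_two hlam
  refine ⟨hε ▸ add_one_sq_div_sub_one_pos hK₀ hK₂ hδ0, fun l₁ l₂ d _ h₁ h₁₂ hd₀ hd₁ => ?_⟩
  have hd : 0 ≤ d := nonneg_of_mul_nonneg_right hd₀ hlam0
  have hε' : 1 / (1 + ε) = (δ ^ 2 + K * δ + 1) / (δ + 1) ^ 2 := by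
    rw [hε, add_sub_cancel, one_div_div]
  rw [hε', div_mul_eq_mul_div, le_div_iff₀ (by positivity)]
  calc ((l₁ + d) ^ 2 + (l₂ + d) ^ 2) * (δ + 1) ^ 2
      ≤ (l₁ ^ 2 + K * (l₁ * l₂) + l₂ ^ 2) * (δ + 1) ^ 2 :=
        mul_le_mul_of_nonneg_right (hK ▸ add_sq_add_add_sq_le hlam0 hd hd₁.le h₁₂) (by positivity)
    _ ≤ (δ ^ 2 + K * δ + 1) * (l₁ + l₂) ^ 2 := by
        rw [mul_comm]
        exact add_one_sq_mul_le_mul_add_sq hK₂.le hδ0.le h₁ h₁₂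

/-- Quantitative core of Lemma 3.1: with `K = 4/λ + 2/λ²` and
`ε = (δ+1)²/(δ² + K·δ + 1) − 1`, one has `ε > 0`, and for all `l₁, l₂, d` with
`0 < δ·l₂ ≤ l₁ ≤ l₂` and `0 ≤ λ·d < l₁`,
`(l₁+d)² + (l₂+d)² ≤ (1/(1+ε))·(l₁+l₂)²`. -/
theorem chord_arc_quantitative (lam δ K ε : ℝ)
    (hlam : 1 + Real.sqrt 2 < lam) (hδ0 : 0 < δ) (hδ1 : δ < 1)
    (hK : K = 4 / lam + 2 / lam ^ 2)
    (hε : ε = (δ + 1) ^ 2 / (δ ^ 2 + K * δ + 1) - 1) :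
    0 < ε ∧
      ∀ l₁ l₂ d : ℝ, 0 < δ * l₂ → δ * l₂ ≤ l₁ → l₁ ≤ l₂ →
        0 ≤ lam * d → lam * d < l₁ →
        (l₁ + d) ^ 2 + (l₂ + d) ^ 2 ≤ (1 / (1 + ε)) * (l₁ + l₂) ^ 2 :=
  chord_arc_quantitative_general lam δ K ε hlam hδ0 hK hε
end

section
/- Let R = e^{−(1+√5)/2}. The function f : [0,R] → [0,∞) defined by f(0) = 0 and f(r) = r·log(1/r)·(1 + log(1/r)) for r ∈ (0,R] is an admissible density; that is: (a) f is continuous, monotone increasing, and f(0) = 0; (b) f(r) ≥ r for all r ∈ [0,R]; (c) for all r ∈ (0,1], lim_{α→0⁺} f(αr)/(r·f(α)) = 1, and this convergence is uniform in r on each compact subset of (0,1]. -/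
open Metric MeasureTheory Set Filter

noncomputable section

/-- `γ` is an absolutely continuous path on `[a, b]`: it is continuous, its (a.e. defined)
derivative has integrable norm, and the fundamental theorem of calculus holds on every
subinterval. -/
def IsACOn (γ : ℝ → E2) (a b : ℝ) : Prop :=
  ContinuousOn γ (Set.Icc a b) ∧
  IntervalIntegrable (fun t => ‖deriv γ t‖) volume a b ∧
  ∀ s t : ℝ, s ∈ Set.Icc a b → t ∈ Set.Icc a b → s ≤ t →
    γ t - γ s = ∫ u in s..t, deriv γ u

/-- The speed of a point at position `p` with velocity `v` with respect to the singular
Riemannian metric `dr² + f(r)²·dθ²` written in Cartesian coordinates: for `p ≠ 0` the radial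
speed is `⟪p,v⟫/‖p‖` and the angular speed is `θ' = (p₁v₂ − p₂v₁)/‖p‖²`; at the origin the
radial speed is `‖v‖` (this value is only relevant on a null set for absolutely continuous
paths, and summing lengths over the subintervals avoiding the origin gives the same value). -/
def warpedSpeed (f : ℝ → ℝ) (p v : E2) : ℝ :=
  if ‖p‖ = 0 then ‖v‖
  else Real.sqrt (((inner ℝ p v : ℝ) / ‖p‖) ^ 2 +
    (f ‖p‖) ^ 2 * ((p 0 * v 1 - p 1 * v 0) / ‖p‖ ^ 2) ^ 2)

/-- The length of the path `γ : [a,b] → ℝ²` with respect to `dr² + f(r)²·dθ²`. -/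
def warpedLength (f : ℝ → ℝ) (γ : ℝ → E2) (a b : ℝ) : ℝ :=
  ∫ t in a..b, warpedSpeed f (γ t) (deriv γ t)

/-- The induced length distance on the closed disk of radius `Rad`: the infimum of
warped lengths of absolutely continuous paths joining `x` to `y` inside the disk. -/
def warpedDist (f : ℝ → ℝ) (Rad : ℝ) (x y : E2) : ℝ :=
  sInf { L : ℝ | ∃ (γ : ℝ → E2) (a b : ℝ), a ≤ b ∧ IsACOn γ a b ∧
    γ a = x ∧ γ b = y ∧ (∀ t ∈ Set.Icc a b, ‖γ t‖ ≤ Rad) ∧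
    L = warpedLength f γ a b }

/-- `f : [0,R] → [0,∞)` is an admissible density: continuous, monotone increasing with
`f 0 = 0`, satisfying `f r ≥ r`, and `f(αr)/(r·f(α)) → 1` as `α → 0⁺` for each `r ∈ (0,1]`,
uniformly on each compact subset `[k,1] ⊆ (0,1]`. -/
def IsAdmissibleDensity (f : ℝ → ℝ) (R : ℝ) : Prop :=
  0 < R ∧
  ContinuousOn f (Set.Icc 0 R) ∧
  MonotoneOn f (Set.Icc 0 R) ∧
  f 0 = 0 ∧
  (∀ r ∈ Set.Icc (0 : ℝ) R, r ≤ f r) ∧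
  (∀ r ∈ Set.Ioc (0 : ℝ) 1,
    Tendsto (fun α => f (α * r) / (r * f α)) (nhdsWithin 0 (Set.Ioi 0)) (nhds 1)) ∧
  (∀ k ∈ Set.Ioc (0 : ℝ) 1,
    TendstoUniformlyOn (fun α r => f (α * r) / (r * f α)) (fun _ => 1)
      (nhdsWithin 0 (Set.Ioi 0)) (Set.Icc k 1))

/-!
Write `s = log (1/α)` and `c = log (1/r)`. Then
`f(αr) / (r f(α)) = (s + c)(1 + s + c) / (s(1 + s))`, which differs from `1` by at most
`c(c + 2)/s`. For `r ∈ [k, 1]` we have `0 ≤ c ≤ log (1/k)`, and `s → ∞` as `α → 0⁺`, which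
gives the uniform convergence. Monotonicity comes from `f'(r) = log² r + log r - 1 ≥ 0` for
`r ≤ e^{-φ}`, and `f(r) ≥ r` from `log (1/r) ≥ 1`.
-/

open Real

open scoped goldenRatio

theorem Metric.tendstoUniformlyOn_of_dist_le {ι α β : Type*} [PseudoMetricSpace β]
    {F : ι → α → β} {f : α → β} {l : Filter ι} {s : Set α} {b : ι → ℝ}
    (hb : Tendsto b l (nhds 0)) (hdist : ∀ᶠ i in l, ∀ x ∈ s, dist (f x) (F i x) ≤ b i) :
    TendstoUniformlyOn F f l s := by
  rw [Metric.tendstoUniformlyOn_iff]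
  intro ε hε
  filter_upwards [hdist, hb.eventually (gt_mem_nhds hε)] with i hi hbi x hx
  exact (hi x hx).trans_lt hbi

theorem abs_div_mul_one_add_sub_one_le {s c : ℝ} (hs : 0 < s) (hc : 0 ≤ c) :
    |(s + c) * (1 + (s + c)) / (s * (1 + s)) - 1| ≤ c * (c + 2) / s := by
  have hden : 0 < s * (1 + s) := by positivity
  rw [div_sub_one hden.ne', abs_of_nonneg (by apply div_nonneg <;> nlinarith),
    div_le_div_iff₀ hden hs]
  nlinarith [mul_nonneg (mul_nonneg hc hc) hs.le, mul_nonneg hc hs.le]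

def logSqDensity (r : ℝ) : ℝ := r * log (1 / r) * (1 + log (1 / r))

theorem logSqDensity_eq (r : ℝ) : logSqDensity r = r * log r ^ 2 - r * log r := by
  rw [logSqDensity, one_div, log_inv]
  ring

/-- On `[0, ∞)` the term `r log² r` is `(2 √r log √r)²`, which is continuous because
`x log x` is. -/
theorem continuousOn_logSqDensity : ContinuousOn logSqDensity (Ici 0) := by
  have hsq : Continuous fun r => 4 * (√r * log √r) ^ 2 :=
    continuous_const.mul ((continuous_mul_log.comp continuous_sqrt).pow 2)
  refine ((hsq.sub continuous_mul_log).continuousOn).congr fun r (hr : 0 ≤ r) => ?_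
  rw [logSqDensity_eq, Pi.sub_apply, log_sqrt hr, mul_pow, sq_sqrt hr]
  ring

theorem hasDerivAt_logSqDensity {r : ℝ} (hr : r ≠ 0) :
    HasDerivAt logSqDensity (log r ^ 2 + log r - 1) r := by
  have hlog := hasDerivAt_log hr
  have h := ((hasDerivAt_id' r).fun_mul (hlog.fun_pow 2)).fun_sub
    ((hasDerivAt_id' r).fun_mul hlog)
  rw [show logSqDensity = _ from funext logSqDensity_eq]
  refine h.congr_deriv ?_
  field_simp
  ring

/-- The derivative `log² r + log r - 1` vanishes at `log r = -φ`: this is where the endpoint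
`e^{-φ}` comes from. -/
theorem monotoneOn_logSqDensity : MonotoneOn logSqDensity (Icc 0 (exp (-φ))) := by
  refine monotoneOn_of_deriv_nonneg (convex_Icc _ _)
    (continuousOn_logSqDensity.mono Icc_subset_Ici_self) (fun r hr => ?_) (fun r hr => ?_)
  · rw [interior_Icc] at hr
    exact (hasDerivAt_logSqDensity hr.1.ne').differentiableAt.differentiableWithinAt
  · rw [interior_Icc] at hr
    have hlog : log r < -φ := by simpa using log_lt_log hr.1 hr.2
    have hfactor : log r ^ 2 + log r - 1 = (log r + φ) * (log r + ψ) := by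
      linear_combination (-log r) * goldenRatio_add_goldenConj - goldenRatio_mul_goldenConj
    rw [(hasDerivAt_logSqDensity hr.1.ne').deriv, hfactor]
    exact mul_nonneg_of_nonpos_of_nonpos (by linarith)
      (by linarith [one_sub_goldenConj, one_lt_goldenRatio])

theorem le_logSqDensity {r : ℝ} (hr : r ∈ Icc 0 (exp (-1))) : r ≤ logSqDensity r := by
  rcases hr.1.eq_or_lt with rfl | hr0
  · simp [logSqDensity]
  have hL : 1 ≤ log (1 / r) := by
    rw [one_div, log_inv, le_neg]
    simpa using log_le_log hr0 hr.2
  rw [logSqDensity, mul_assoc]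
  exact le_mul_of_one_le_right hr0.le (by nlinarith)

theorem logSqDensity_mul_div {α r : ℝ} (hα : α ≠ 0) (hr : r ≠ 0) :
    logSqDensity (α * r) / (r * logSqDensity α) =
      (log (1 / α) + log (1 / r)) * (1 + (log (1 / α) + log (1 / r))) /
        (log (1 / α) * (1 + log (1 / α))) := by
  have hlog : log (1 / (α * r)) = log (1 / α) + log (1 / r) := by
    rw [← log_mul (one_div_ne_zero hα) (one_div_ne_zero hr), one_div_mul_one_div]
  set s := log (1 / α)
  set c := log (1 / r)
  rw [logSqDensity, logSqDensity, hlog, ← mul_div_mul_left _ (s * (1 + s)) (mul_ne_zero hα hr)]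
  ring

theorem tendstoUniformlyOn_logSqDensity_mul_div {k : ℝ} (hk : 0 < k) :
    TendstoUniformlyOn (fun α r => logSqDensity (α * r) / (r * logSqDensity α)) (fun _ => 1)
      (nhdsWithin 0 (Ioi 0)) (Icc k 1) := by
  set K := log (1 / k)
  have hlog : Tendsto (fun α => log (1 / α)) (nhdsWithin 0 (Ioi 0)) atTop := by
    refine (tendsto_neg_atBot_atTop.comp tendsto_log_nhdsGT_zero).congr fun α => ?_
    simp [log_inv]
  refine Metric.tendstoUniformlyOn_of_dist_le (b := fun α => K * (K + 2) / log (1 / α))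
    (hlog.const_div_atTop _) ?_
  filter_upwards [hlog.eventually_gt_atTop 0, self_mem_nhdsWithin] with α hs hα r hr
  have hr0 : 0 < r := hk.trans_le hr.1
  have hc : 0 ≤ log (1 / r) := log_nonneg (one_le_one_div hr0 hr.2)
  have hcK : log (1 / r) ≤ K := log_le_log (one_div_pos.2 hr0) (one_div_le_one_div_of_le hk hr.1)
  have hK : 0 ≤ K := hc.trans hcK
  rw [dist_comm, Real.dist_eq, logSqDensity_mul_div (ne_of_gt hα) hr0.ne']
  refine (abs_div_mul_one_add_sub_one_le hs hc).trans ?_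
  gcongr

/-- Lemma 4.1, second part: `f(r) = r·log(1/r)·(1 + log(1/r))` is an admissible density on
`[0, e^{−(1+√5)/2}]`. -/
theorem rLogOneDivRSq_isAdmissibleDensity :
    IsAdmissibleDensity (fun r => r * Real.log (1 / r) * (1 + Real.log (1 / r)))
      (Real.exp (-(1 + Real.sqrt 5) / 2)) := by
  rw [neg_div, ← goldenRatio]
  change IsAdmissibleDensity logSqDensity (exp (-φ))
  refine ⟨exp_pos _, continuousOn_logSqDensity.mono Icc_subset_Ici_self, monotoneOn_logSqDensity,
    by simp [logSqDensity], fun r hr => le_logSqDensity ⟨hr.1, hr.2.trans ?_⟩,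
    fun r hr => (tendstoUniformlyOn_logSqDensity_mul_div hr.1).tendsto_at ⟨le_rfl, hr.2⟩,
    fun k hk => tendstoUniformlyOn_logSqDensity_mul_div hk.1⟩
  exact exp_le_exp.2 (neg_le_neg one_lt_goldenRatio.le)
end
end

section
/- Let f : [0,R] → [0,∞) be an admissible density. Then there exists a constant C > 0, independent of r, such that f(r) ≤ C·f(r/2) for all r ∈ (0,R]. -/
open Metric MeasureTheory Set Filter

noncomputable section

/-! Near `0` the ratio `f(r/2)/(f(r)/2)` tends to `1`, so `f r ≤ 4 f(r/2)` for `r < δ`;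
on `[δ, R]` monotonicity gives `f r ≤ f R` and `f(r/2) ≥ f(δ/2) > 0`, so the constant
`f R / f(δ/2)` works there. -/

theorem Filter.Tendsto.eventually_le_two_div_mul {ι : Type*} {l : Filter ι} {f : ι → ℝ}
    {g : ι → ℝ} {s : ℝ} (hs : 0 < s) (h : Tendsto (fun i => g i / (s * f i)) l (nhds 1))
    (hpos : ∀ᶠ i in l, 0 < f i) : ∀ᶠ i in l, f i ≤ 2 / s * g i := by
  filter_upwards [h.eventually (eventually_gt_nhds one_half_lt_one), hpos] with i hi hfi
  rw [lt_div_iff₀ (by positivity)] at hi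
  rw [div_mul_eq_mul_div, le_div_iff₀ hs]
  linarith

theorem MonotoneOn.le_div_mul_of_le_of_le {α : Type*} [Preorder α] {s : Set α} {f : α → ℝ}
    (hf : MonotoneOn f s) {a b x y : α} (ha : a ∈ s) (hb : b ∈ s) (hx : x ∈ s) (hy : y ∈ s)
    (hab : a ≤ b) (hxb : x ≤ b) (hay : a ≤ y) (hfa : 0 < f a) : f x ≤ f b / f a * f y :=
  have hfb : 0 < f b := hfa.trans_le (hf ha hb hab)
  calc f x ≤ f b := hf hx hb hxb
    _ = f b / f a * f a := (div_mul_cancel₀ _ hfa.ne').symm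
    _ ≤ f b / f a * f y := by gcongr; exact hf ha hy hay

/-- Lemma 4.3(3), sphere-length doubling: for an admissible density `f` there is a constant
`C > 0`, independent of `r`, such that `f(r) ≤ C·f(r/2)` for all `r ∈ (0,R]`. -/
theorem admissibleDensity_doubling
    (f : ℝ → ℝ) (R : ℝ) (hf : IsAdmissibleDensity f R) :
    ∃ C : ℝ, 0 < C ∧ ∀ r ∈ Set.Ioc (0 : ℝ) R, f r ≤ C * f (r / 2) := by
  obtain ⟨hR, -, hmono, -, hge, hratio, -⟩ := hf
  have hpos : ∀ r ∈ Ioc 0 R, 0 < f r := fun r hr =>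
    hr.1.trans_le (hge r (Ioc_subset_Icc_self hr))
  have hsmall : ∀ᶠ r in nhdsWithin 0 (Ioi 0), f r ≤ 4 * f (r / 2) := by
    have hpos' : ∀ᶠ r in nhdsWithin (0 : ℝ) (Ioi 0), 0 < f r :=
      Filter.eventually_of_mem (Ioc_mem_nhdsGT hR) hpos
    filter_upwards [(hratio (1 / 2) (by norm_num)).eventually_le_two_div_mul (by norm_num)
      hpos'] with r hr
    convert hr using 3 <;> ring
  obtain ⟨δ, hδ, hδsmall⟩ := mem_nhdsGT_iff_exists_Ioo_subset.mp hsmall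
  set ε := min δ R
  have hε : ε / 2 ∈ Ioc 0 R := ⟨half_pos (lt_min hδ hR), by linarith [min_le_right δ R]⟩
  refine ⟨max 4 (f R / f (ε / 2)), lt_max_of_lt_left four_pos, fun r hr => ?_⟩
  have hr2 : 0 ≤ f (r / 2) := (hpos (r / 2) ⟨by linarith [hr.1], by linarith [hr.1, hr.2]⟩).le
  rcases lt_or_ge r ε with hrε | hεr
  · calc f r ≤ 4 * f (r / 2) := hδsmall ⟨hr.1, hrε.trans_le (min_le_left δ R)⟩
      _ ≤ _ := by gcongr; exact le_max_left _ _
  · calc f r ≤ f R / f (ε / 2) * f (r / 2) :=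
          hmono.le_div_mul_of_le_of_le (Ioc_subset_Icc_self hε) ⟨hR.le, le_rfl⟩
            (Ioc_subset_Icc_self hr) ⟨by linarith [hr.1], by linarith [hr.2]⟩ hε.2 hr.2
            (by linarith) (hpos _ hε)
      _ ≤ _ := by gcongr; exact le_max_right _ _
end
end

section
/- Let X be a complete metric space, let K ⊂ 𝔻̄ (the closed unit disk in ℝ²) be compact, and set Ω = 𝔻∖K, where 𝔻 is the open unit disk. Let u : 𝔻̄ → X be continuous with ℋ¹(u(K)) = 0 (Hausdorff 1-measure in X). Suppose ρ : Ω → [0,∞] is a Borel function satisfying the upper gradient inequality on Ω: for every absolutely continuous path γ : [a,b] → Ω, d(u(γ(a)), u(γ(b))) ≤ ∫ₐᵇ ρ(γ(t))·‖γ'(t)‖ dt. Define ρ̃ : 𝔻 → [0,∞] by ρ̃ = ρ on Ω and ρ̃ = 0 on K ∩ 𝔻. Then ρ̃ satisfies the upper gradient inequality on all of 𝔻: for every absolutely continuous path γ : [a,b] → 𝔻, d(u(γ(a)), u(γ(b))) ≤ ∫ₐᵇ ρ̃(γ(t))·‖γ'(t)‖ dt. -/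
open Metric MeasureTheory Set Filter

noncomputable section

/-!
Fix a path `γ : [a, b] → 𝔻` and compose `u ∘ γ` with the 1-Lipschitz function
`f = dist (u (γ a))`. By the intermediate value theorem, `f ∘ u ∘ γ` covers the interval
`[0, d(u(γ a), u(γ b))]`. Times spent in `K` are mapped into `f(u(K))`, which is Lebesgue-null
because `ℋ¹(u(K)) = 0`. The remaining times form an open set, a countable disjoint union of
intervals; on each of them the image of `f ∘ u ∘ γ` has measure at most its diameter, hence at
most the `ρ`-length of `γ` there, by the upper gradient inequality on `Ω`.
-/

open scoped ENNReal

theorem IsACOn.mono {γ : ℝ → E2} {a b c d : ℝ} (hγ : IsACOn γ a b) (hcd : c ≤ d)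
    (hsub : Icc c d ⊆ Icc a b) : IsACOn γ c d := by
  obtain ⟨hcont, hint, hftc⟩ := hγ
  have hc : c ∈ Icc a b := hsub (left_mem_Icc.2 hcd)
  have hd : d ∈ Icc a b := hsub (right_mem_Icc.2 hcd)
  refine ⟨hcont.mono hsub, hint.mono_set ?_, fun s t hs ht hst => hftc s t (hsub hs) (hsub ht) hst⟩
  exact uIcc_subset_uIcc (Icc_subset_uIcc hc) (Icc_subset_uIcc hd)

def IsUpperGradientOn {X : Type*} [PseudoMetricSpace X] (u : E2 → X) (ρ : E2 → ℝ≥0∞)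
    (U : Set E2) : Prop :=
  ∀ (γ : ℝ → E2) (a b : ℝ), a ≤ b → IsACOn γ a b → (∀ t ∈ Icc a b, γ t ∈ U) →
    ENNReal.ofReal (dist (u (γ a)) (u (γ b))) ≤
      ∫⁻ t in Icc a b, ρ (γ t) * ENNReal.ofReal ‖deriv γ t‖

theorem IsUpperGradientOn.ediam_image_le {X : Type*} [PseudoMetricSpace X] {u : E2 → X}
    {ρ : E2 → ℝ≥0∞} {U : Set E2} (hρ : IsUpperGradientOn u ρ U) {γ : ℝ → E2} {a b : ℝ}
    (hγ : IsACOn γ a b) {s : Set ℝ} (hs : s.OrdConnected) (hsab : s ⊆ Icc a b)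
    (hsU : MapsTo γ s U) :
    ediam ((u ∘ γ) '' s) ≤ ∫⁻ t in s, ρ (γ t) * ENNReal.ofReal ‖deriv γ t‖ := by
  have hle : ∀ x ∈ s, ∀ y ∈ s, x ≤ y →
      edist (u (γ x)) (u (γ y)) ≤ ∫⁻ t in s, ρ (γ t) * ENNReal.ofReal ‖deriv γ t‖ := by
    intro x hx y hy hxy
    have hxys : Icc x y ⊆ s := hs.out hx hy
    rw [edist_dist]
    exact (hρ γ x y hxy (hγ.mono hxy (hxys.trans hsab)) fun t ht => hsU (hxys ht)).trans
      (lintegral_mono_set hxys)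
  refine ediam_image_le_iff.2 fun x hx y hy => ?_
  rcases le_total x y with hxy | hyx
  · exact hle x hx y hy hxy
  · rw [edist_comm]
    exact hle y hy x hx hyx

theorem ofReal_dist_le_volume_image_dist {X : Type*} [PseudoMetricSpace X] {v : ℝ → X}
    {a b : ℝ} (hab : a ≤ b) (hv : ContinuousOn v (Icc a b)) :
    ENNReal.ofReal (dist (v a) (v b)) ≤ volume ((fun t => dist (v a) (v t)) '' Icc a b) := by
  have hivt := intermediate_value_Icc hab
    ((LipschitzWith.dist_right (v a)).continuous.comp_continuousOn hv)
  simp only [Function.comp_def, dist_self] at hivt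
  simpa only [Real.volume_Icc, sub_zero] using measure_mono (μ := volume) hivt

theorem volume_image_dist_le_ediam {α X : Type*} [PseudoMetricSpace X] (x : X) (v : α → X)
    (s : Set α) : volume ((fun t => dist x (v t)) '' s) ≤ ediam (v '' s) := by
  calc volume ((fun t => dist x (v t)) '' s) ≤ ediam ((dist x ∘ v) '' s) := Real.volume_le_diam _
    _ ≤ ediam (v '' s) := by
      rw [image_comp]
      simpa using (LipschitzWith.dist_right x).ediam_image_le (v '' s)

theorem LipschitzWith.volume_image_eq_zero_of_hausdorffMeasure_eq_zero {X : Type*}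
    [EMetricSpace X] [MeasurableSpace X] [BorelSpace X] {K : NNReal} {f : X → ℝ}
    (hf : LipschitzWith K f) {s : Set X} (hs : μH[1] s = 0) : volume (f '' s) = 0 := by
  rw [← hausdorffMeasure_real]
  exact le_antisymm ((hf.hausdorffMeasure_image_le zero_le_one s).trans_eq (by rw [hs, mul_zero]))
    zero_le

theorem volume_image_dist_le_of_hausdorffMeasure_eq_zero {α X : Type*} [MetricSpace X]
    [MeasurableSpace X] [BorelSpace X] (x : X) (v : α → X) {N : Set X} (hN : μH[1] N = 0)
    {s G F : Set α} (hF : F.Finite) (hs : s ⊆ G ∪ F ∪ v ⁻¹' N) :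
    volume ((fun t => dist x (v t)) '' s) ≤ volume ((fun t => dist x (v t)) '' G) := by
  set f := fun t => dist x (v t)
  have hnull : volume (f '' F ∪ dist x '' N) = 0 := measure_union_null
    ((hF.image f).measure_zero _)
    ((LipschitzWith.dist_right x).volume_image_eq_zero_of_hausdorffMeasure_eq_zero hN)
  calc volume (f '' s) ≤ volume (f '' G ∪ (f '' F ∪ dist x '' N)) := by
        refine measure_mono ?_
        rintro _ ⟨t, ht, rfl⟩
        rcases hs ht with (htG | htF) | htN
        exacts [Or.inl ⟨t, htG, rfl⟩, Or.inr (Or.inl ⟨t, htF, rfl⟩),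
          Or.inr (Or.inr ⟨v t, htN, rfl⟩)]
    _ ≤ volume (f '' G) := (measure_union_le _ _).trans_eq (by rw [hnull, add_zero])

theorem IsOpen.countable_range_connectedComponentIn {α : Type*} [TopologicalSpace α]
    [LocallyConnectedSpace α] [TopologicalSpace.SeparableSpace α] {U : Set α} (hU : IsOpen U) :
    (range fun x : U => connectedComponentIn U x).Countable := by
  obtain ⟨D, hDc, hDd⟩ := TopologicalSpace.exists_countable_dense α
  refine (hDc.image (connectedComponentIn U)).mono ?_
  rintro _ ⟨x, rfl⟩
  obtain ⟨d, hdD, hdx⟩ :=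
    hDd.exists_mem_open hU.connectedComponentIn ⟨x, mem_connectedComponentIn x.2⟩
  exact ⟨d, hdD, (connectedComponentIn_eq hdx).symm⟩

theorem IsOpen.measure_image_le_lintegral {α β : Type*} [TopologicalSpace β]
    [LocallyConnectedSpace β] [TopologicalSpace.SeparableSpace β] [MeasurableSpace β]
    [OpensMeasurableSpace β] [MeasurableSpace α] {ν : Measure β} (μ : Measure α) {U : Set β}
    (hU : IsOpen U) (F : β → α) (g : β → ℝ≥0∞)
    (h : ∀ s ⊆ U, IsPreconnected s → μ (F '' s) ≤ ∫⁻ t in s, g t ∂ν) :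
    μ (F '' U) ≤ ∫⁻ t in U, g t ∂ν := by
  set S := range fun x : U => connectedComponentIn U x
  have hS : S.Countable := hU.countable_range_connectedComponentIn
  have hUS : U = ⋃ c ∈ S, c := by
    rw [biUnion_range]
    exact (iUnion_subset fun x => connectedComponentIn_subset _ _).antisymm'
      fun x hx => mem_iUnion.2 ⟨⟨x, hx⟩, mem_connectedComponentIn hx⟩
  have hdisj : S.PairwiseDisjoint id := by
    rintro _ ⟨x, rfl⟩ _ ⟨y, rfl⟩ hne
    refine disjoint_left.2 fun z hzx hzy => hne ?_
    exact (connectedComponentIn_eq hzx).trans (connectedComponentIn_eq hzy).symm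
  have hmeas : ∀ c ∈ S, MeasurableSet c := by
    rintro _ ⟨x, rfl⟩
    exact hU.connectedComponentIn.measurableSet
  calc μ (F '' U) = μ (⋃ c ∈ S, F '' c) := by rw [hUS, image_iUnion₂]
    _ ≤ ∑' c : S, μ (F '' c) := measure_biUnion_le μ hS _
    _ ≤ ∑' c : S, ∫⁻ t in c, g t ∂ν := by
        refine ENNReal.tsum_le_tsum fun ⟨c, hc⟩ => ?_
        obtain ⟨x, rfl⟩ := hc
        exact h _ (connectedComponentIn_subset _ _) isPreconnected_connectedComponentIn
    _ = ∫⁻ t in U, g t ∂ν := by rw [hUS, lintegral_biUnion hS hmeas hdisj]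

theorem zero_extension_upper_gradient_general
    (X : Type) [MetricSpace X] [MeasurableSpace X] [BorelSpace X]
    (K : Set E2) (hKcomp : IsCompact K)
    (u : E2 → X) (huc : ContinuousOn u (Metric.closedBall (0 : E2) 1))
    (huK : μH[1] (u '' K) = 0)
    (ρ : E2 → ENNReal)
    (hρ : ∀ (γ : ℝ → E2) (a b : ℝ), a ≤ b → IsACOn γ a b →
      (∀ t ∈ Set.Icc a b, γ t ∈ Metric.ball (0 : E2) 1 \ K) →
      ENNReal.ofReal (dist (u (γ a)) (u (γ b))) ≤
        ∫⁻ t in Set.Icc a b, ρ (γ t) * ENNReal.ofReal ‖deriv γ t‖) :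
    ∀ (γ : ℝ → E2) (a b : ℝ), a ≤ b → IsACOn γ a b →
      (∀ t ∈ Set.Icc a b, γ t ∈ Metric.ball (0 : E2) 1) →
      ENNReal.ofReal (dist (u (γ a)) (u (γ b))) ≤
        ∫⁻ t in Set.Icc a b,
          (Metric.ball (0 : E2) 1 \ K).indicator ρ (γ t) * ENNReal.ofReal ‖deriv γ t‖ := by
  intro γ a b hab hγ hball
  set Ω := ball (0 : E2) 1 \ K
  set f : ℝ → ℝ := fun t => dist (u (γ a)) (u (γ t))
  set G := Ioo a b ∩ γ ⁻¹' Ω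
  have hG : IsOpen G := (hγ.1.mono Ioo_subset_Icc_self).isOpen_inter_preimage isOpen_Ioo
    (isOpen_ball.sdiff hKcomp.isClosed)
  have hGab : G ⊆ Icc a b := inter_subset_left.trans Ioo_subset_Icc_self
  have hcover : Icc a b ⊆ G ∪ {a, b} ∪ (u ∘ γ) ⁻¹' (u '' K) := by
    intro t ht
    by_cases htK : γ t ∈ K
    · exact Or.inr ⟨γ t, htK, rfl⟩
    by_cases hend : t ∈ ({a, b} : Set ℝ)
    · exact Or.inl (Or.inr hend)
    refine Or.inl (Or.inl ⟨?_, hball t ht, htK⟩)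
    rw [← Icc_sdiff_both]
    exact ⟨ht, hend⟩
  calc ENNReal.ofReal (dist (u (γ a)) (u (γ b))) ≤ volume (f '' Icc a b) :=
        ofReal_dist_le_volume_image_dist hab
          (huc.comp hγ.1 fun t ht => ball_subset_closedBall (hball t ht))
    _ ≤ volume (f '' G) :=
        volume_image_dist_le_of_hausdorffMeasure_eq_zero _ (u ∘ γ) huK (toFinite _) hcover
    _ ≤ ∫⁻ t in G, ρ (γ t) * ENNReal.ofReal ‖deriv γ t‖ :=
        hG.measure_image_le_lintegral _ _ _ fun s hsG hs => (volume_image_dist_le_ediam _ _ _).trans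
          (IsUpperGradientOn.ediam_image_le hρ hγ hs.ordConnected (hsG.trans hGab)
            fun t ht => (hsG ht).2)
    _ = ∫⁻ t in G, Ω.indicator ρ (γ t) * ENNReal.ofReal ‖deriv γ t‖ :=
        setLIntegral_congr_fun hG.measurableSet fun t ht => by
          rw [indicator_of_mem (show γ t ∈ Ω from ht.2)]
    _ ≤ _ := lintegral_mono_set hGab

/-- Lemma 6.1 (core): let `X` be a complete metric space, `K ⊆ 𝔻̄` compact,
`Ω = 𝔻 ∖ K`, and `u : 𝔻̄ → X` continuous with `ℋ¹(u(K)) = 0`. If the Borel function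
`ρ : Ω → [0,∞]` satisfies the upper gradient inequality on `Ω`, then its zero-extension
`ρ̃` (equal to `ρ` on `Ω` and `0` elsewhere) satisfies the upper gradient inequality for
all absolutely continuous paths in `𝔻`. -/
theorem zero_extension_upper_gradient
    (X : Type) [MetricSpace X] [CompleteSpace X] [MeasurableSpace X] [BorelSpace X]
    (K : Set E2) (hKcomp : IsCompact K) (hKsub : K ⊆ Metric.closedBall (0 : E2) 1)
    (u : E2 → X) (huc : ContinuousOn u (Metric.closedBall (0 : E2) 1))
    (huK : μH[1] (u '' K) = 0)
    (ρ : E2 → ENNReal) (hρmeas : Measurable ρ)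
    (hρ : ∀ (γ : ℝ → E2) (a b : ℝ), a ≤ b → IsACOn γ a b →
      (∀ t ∈ Set.Icc a b, γ t ∈ Metric.ball (0 : E2) 1 \ K) →
      ENNReal.ofReal (dist (u (γ a)) (u (γ b))) ≤
        ∫⁻ t in Set.Icc a b, ρ (γ t) * ENNReal.ofReal ‖deriv γ t‖) :
    ∀ (γ : ℝ → E2) (a b : ℝ), a ≤ b → IsACOn γ a b →
      (∀ t ∈ Set.Icc a b, γ t ∈ Metric.ball (0 : E2) 1) →
      ENNReal.ofReal (dist (u (γ a)) (u (γ b))) ≤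
        ∫⁻ t in Set.Icc a b,
          (Metric.ball (0 : E2) 1 \ K).indicator ρ (γ t) * ENNReal.ofReal ‖deriv γ t‖ :=
  zero_extension_upper_gradient_general X K hKcomp u huc huK ρ hρ
end
end
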